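/- arXiv:1906.07219 — 3 statements merged into one kernel-verified Lean document; each statement's English description precedes it below -/
import Mathlib

section
/- For an explicit Runge-Kutta method with r ≥ 2 stages, if the stability region S (the set of complex z with |P(z)| ≤ 1, where P is the degree-≤r stability polynomial with P(0)=1 and P'(0)=1) contains the imaginary segment i·[a,b] with a < 0 < b, then [a,b] ⊆ [-(r-1), r-1]. -/
/-!
Since `P` is real, `|P(-iy)| = |P(iy)|`, so the bound holds on `i·[-M, M]` with `M = max b (-a)`.
Writing `P(iMy) = A(y) + i B(y)` with real polynomials `A`, `B` gives `A² + B² ≤ 1` on `[-1, 1]`,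
`A(0) = 1`, `A'(0) = B(0) = 0` and `B'(0) = M`. If `r` is even, `B` has degree `≤ m := r - 1`
with `m` odd, and `|p'(0)| ≤ m` for every such `p` bounded by `1` on `[-1, 1]`. If `r` is odd, `A`
has degree `≤ m := r - 1` with `m` even, and such `p` bounded by `1` with `p(0) = 1` satisfy
`p''(0) ≥ -m²`; as `1 - A² - B² ≥ 0` vanishes at `0`, `A''(0) + B'(0)² ≤ 0`, whence `M² ≤ m²`.

Both bounds come from Lagrange interpolation at the extremal points `cos (iπ/m)` of the Chebyshev
polynomial `T_m`: by the symmetry of these nodes, the weights expressing `p'(0)` (resp. `p''(0)`)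
through the values `p(cos (iπ/m))` alternate in sign like `T_m(cos (iπ/m)) = (-1)^i`, so `±T_m`
is extremal.
-/

open Polynomial Finset

namespace Lagrange

variable {F ι : Type*} [Field F] [DecidableEq ι] {s : Finset ι} {v : ι → F}

theorem coeff_eq_sum_eval_mul_coeff_basis (hvs : Set.InjOn v s) {p : F[X]} (hp : p.degree < #s)
    (k : ℕ) : p.coeff k = ∑ i ∈ s, p.eval (v i) * (Lagrange.basis s v i).coeff k := by
  conv_lhs => rw [eq_interpolate hvs hp]
  simp [interpolate_apply, coeff_C_mul]

theorem coeff_basis {i : ι} (hi : i ∈ s) (k : ℕ) :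
    (Lagrange.basis s v i).coeff k = nodalWeight s v i * (nodal (s.erase i) v).coeff k := by
  rw [basis_eq_prod_sub_inv_mul_nodal_div hi, ← nodal_erase_eq_nodal_div hi, coeff_C_mul]

theorem coeff_le_coeff_of_forall_eval_mul_coeff_basis_le [LinearOrder F] [IsOrderedRing F]
    (hvs : Set.InjOn v s) {p q : F[X]} (hp : p.degree < #s) (hq : q.degree < #s) {k : ℕ}
    (h : ∀ i ∈ s, p.eval (v i) * (Lagrange.basis s v i).coeff k
      ≤ q.eval (v i) * (Lagrange.basis s v i).coeff k) :
    p.coeff k ≤ q.coeff k := by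
  rw [coeff_eq_sum_eval_mul_coeff_basis hvs hp, coeff_eq_sum_eval_mul_coeff_basis hvs hq]
  exact sum_le_sum h

end Lagrange

lemma mul_le_mul_of_abs_le_abs {R : Type*} [Ring R] [LinearOrder R] [IsOrderedRing R] {a t w : R}
    (ha : |a| ≤ |t|) (htw : 0 ≤ t * w) : a * w ≤ t * w :=
  calc a * w ≤ |a| * |w| := abs_mul a w ▸ le_abs_self _
    _ ≤ |t| * |w| := by gcongr
    _ = t * w := by rw [← abs_mul, abs_of_nonneg htw]

namespace Polynomial.Chebyshev

open Real Lagrange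

variable {m i : ℕ}

lemma node_sub (hm : m ≠ 0) (hi : i ≤ m) : node m (m - i) = -node m i := by
  rw [node, node, Nat.cast_sub hi, ← cos_pi_sub]
  congr 1
  field_simp

lemma node_div_two (hm : Even m) (hm0 : m ≠ 0) : node m (m / 2) = 0 := by
  have h := node_sub hm0 (Nat.div_le_self m 2)
  rw [show m - m / 2 = m / 2 by grind] at h
  linarith

lemma node_ne_zero (hm : m ≠ 0) (hi : i ≤ m) (h2 : 2 * i ≠ m) : node m i ≠ 0 := by
  intro h0
  have h : node m (m - i) = node m i := by rw [node_sub hm hi, h0, neg_zero]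
  have := (strictAntiOn_node m).injOn (by simp) (by simp; omega) h
  omega

lemma zero_lt_negOnePow_mul_nodalWeight_node (hi : i ≤ m) :
    0 < (-1) ^ i * nodalWeight (range (m + 1)) (node m) i := by
  have := inv_pos_of_pos (zero_lt_prod_node_sub_node hi)
  rwa [mul_inv, ← inv_pow, inv_neg_one, ← prod_inv_distrib] at this

lemma nodal_node_comp_neg_X (hm : m ≠ 0) :
    (nodal (range (m + 1)) (node m)).comp (-X)
      = Polynomial.C ((-1) ^ (m + 1)) * nodal (range (m + 1)) (node m) := by
  rw [nodal, prod_comp]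
  calc ∏ j ∈ range (m + 1), (X - Polynomial.C (node m j)).comp (-X)
      = ∏ j ∈ range (m + 1),
          Polynomial.C (-1) * (X - Polynomial.C (node m (m + 1 - 1 - j))) := by
        refine prod_congr rfl fun j hj => ?_
        rw [Nat.add_sub_cancel, node_sub hm (by grind)]
        simp only [sub_comp, X_comp, C_comp, map_neg, map_one]
        ring
    _ = _ := by
        rw [prod_mul_distrib, prod_const, card_range, C_pow,
          prod_range_reflect (fun j => X - Polynomial.C (node m j))]

lemma coeff_nodal_node_eq_zero (hm : m ≠ 0) {k : ℕ} (hk : Even (m + k)) :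
    (nodal (range (m + 1)) (node m)).coeff k = 0 := by
  have h := congrArg (coeff · k) (nodal_node_comp_neg_X hm)
  rw [show (-X : ℝ[X]) = Polynomial.C (-1) * X by simp, comp_C_mul_X_coeff, coeff_C_mul] at h
  have hsign : (-1 : ℝ) ^ (m + 1) * (-1) ^ k = -1 := by
    rw [← pow_add, show m + 1 + k = m + k + 1 by ring, pow_succ, hk.neg_one_pow]
    ring
  have hsq : ((-1 : ℝ) ^ k) ^ 2 = 1 := by rw [← pow_mul, mul_comm, pow_mul]; simp
  set ω := (nodal (range (m + 1)) (node m)).coeff k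
  linear_combination ((-1) ^ k * h + ω * hsign - ω * hsq) / 2

-- These two identities make the weight `nodalWeight i * (nodal (erase i)).coeff k` of node `i`
-- in the interpolation formula for `p.coeff k` (`k = 1` for odd `m`, `k = 2` for even `m`) equal
-- to `nodalWeight i` times a constant over `node m i ^ 2`, so its sign alternates like `(-1) ^ i`.
lemma node_sq_mul_coeff_one_nodal_erase (hm : Odd m) (hi : i ≤ m) :
    node m i ^ 2 * (nodal ((range (m + 1)).erase i) (node m)).coeff 1
      = -(nodal (range (m + 1)) (node m)).coeff 0 := by
  have hω := nodal_eq_mul_nodal_erase (v := node m) (mem_range.2 (Nat.lt_succ_of_le hi))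
  have h0 := congrArg (coeff · 0) hω
  have h1 := congrArg (coeff · 1) hω
  simp only [mul_coeff_zero, coeff_X_sub_C_mul, coeff_sub, coeff_X_zero, coeff_C_zero, zero_add,
    zero_sub, Nat.succ_eq_add_one] at h0 h1
  rw [coeff_nodal_node_eq_zero hm.pos.ne' (by grind)] at h1
  linear_combination h0 + node m i * h1

lemma node_sq_mul_coeff_two_nodal_erase (hm : Even m) (hm0 : m ≠ 0) (hi : i ≤ m)
    (hi2 : 2 * i ≠ m) :
    node m i ^ 2 * (nodal ((range (m + 1)).erase i) (node m)).coeff 2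
      = -(nodal (range (m + 1)) (node m)).coeff 1 := by
  have hω := nodal_eq_mul_nodal_erase (v := node m) (mem_range.2 (Nat.lt_succ_of_le hi))
  have h0 := congrArg (coeff · 0) hω
  have h1 := congrArg (coeff · 1) hω
  have h2 := congrArg (coeff · 2) hω
  simp only [mul_coeff_zero, coeff_X_sub_C_mul, coeff_sub, coeff_X_zero, coeff_C_zero, zero_add,
    zero_sub, Nat.succ_eq_add_one] at h0 h1 h2
  rw [coeff_nodal_node_eq_zero hm0 (by grind)] at h0 h2
  have hN0 : (nodal ((range (m + 1)).erase i) (node m)).coeff 0 = 0 := by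
    simpa [node_ne_zero hm0 hi hi2] using h0
  rw [hN0] at h1
  linear_combination h1 + node m i * h2

lemma coeff_one_nodal_node (hm : Even m) (hm0 : m ≠ 0) :
    (nodal (range (m + 1)) (node m)).coeff 1
      = (nodalWeight (range (m + 1)) (node m) (m / 2))⁻¹ := by
  have hω := nodal_eq_mul_nodal_erase (v := node m)
    (mem_range.2 (Nat.lt_succ_of_le (Nat.div_le_self m 2)))
  rw [nodalWeight_eq_eval_nodal_erase_inv, inv_inv, hω, node_div_two hm hm0, map_zero, sub_zero,
    coeff_X_mul, coeff_zero_eq_eval_zero]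

lemma abs_coeff_one_T_real (hm : Odd m) : |(T ℝ m).coeff 1| = m := by
  have hU : Even ((m : ℤ) - 1) := by obtain ⟨j, rfl⟩ := hm; exact ⟨j, by push_cast; ring⟩
  have h : (T ℝ m).coeff 1 = (derivative (T ℝ m)).eval 0 := by
    rw [← coeff_zero_eq_eval_zero, coeff_derivative]; simp
  rw [h, T_derivative_eq_U, eval_mul, U_eval_zero_of_even ℝ hU]
  simp [abs_mul]

lemma coeff_two_T_real (n : ℤ) : (T ℝ n).coeff 2 = -(n ^ 2 / 2) * (T ℝ n).eval 0 := by
  have h := iterate_derivative_T_eval_zero_recurrence (R := ℝ) n 0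
  rw [← coeff_zero_eq_eval_zero, coeff_iterate_derivative, zero_add, Nat.descFactorial_self,
    Nat.factorial_two, nsmul_eq_mul, Function.iterate_zero_apply, Nat.cast_zero] at h
  linear_combination h / 2

lemma coeff_le_coeff_of_eval_node_mul_le {p q : ℝ[X]} (hp : p.natDegree ≤ m)
    (hq : q.natDegree ≤ m) {k : ℕ}
    (h : ∀ i ≤ m, p.eval (node m i) * (Lagrange.basis (range (m + 1)) (node m) i).coeff k
      ≤ q.eval (node m i) * (Lagrange.basis (range (m + 1)) (node m) i).coeff k) :
    p.coeff k ≤ q.coeff k := by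
  have hdeg : ∀ f : ℝ[X], f.natDegree ≤ m → f.degree < #(range (m + 1)) := fun f hf => by
    rw [card_range]; exact (degree_le_of_natDegree_le hf).trans_lt (Nat.cast_lt.2 m.lt_succ_self)
  exact coeff_le_coeff_of_forall_eval_mul_coeff_basis_le (strictAntiOn_node m).injOn
    (hdeg p hp) (hdeg q hq) fun i hi => h i (Nat.lt_succ_iff.mp (mem_range.mp hi))

theorem abs_coeff_one_le_of_forall_abs_le_one (hm : Odd m) {p : ℝ[X]} (hp : p.natDegree ≤ m)
    (hbnd : ∀ x ∈ Set.Icc (-1) 1, |p.eval x| ≤ 1) : |p.coeff 1| ≤ m := by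
  set ω₀ := (nodal (range (m + 1)) (node m)).coeff 0
  -- `σ` absorbs the unknown sign of `ω₀`, making the signs of `σ • T_m` match the weights.
  obtain ⟨σ, hσ, hσω⟩ : ∃ σ : ℝ, |σ| = 1 ∧ 0 ≤ σ * -ω₀ := by
    rcases le_total 0 (-ω₀) with h | h
    exacts [⟨1, abs_one, by linarith⟩, ⟨-1, by simp, by linarith⟩]
  have hle : ∀ q : ℝ[X], q.natDegree ≤ m → (∀ x ∈ Set.Icc (-1) 1, |q.eval x| ≤ 1) →
      q.coeff 1 ≤ σ * (T ℝ m).coeff 1 := by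
    intro q hq hqbnd
    rw [← coeff_C_mul]
    refine coeff_le_coeff_of_eval_node_mul_le hq ((natDegree_C_mul_le _ _).trans (by simp))
      fun i hi => mul_le_mul_of_abs_le_abs ?_ ?_
    · rw [eval_C_mul, eval_T_real_node (mem_Iic.2 hi), abs_mul, hσ, abs_pow, abs_neg, abs_one,
        one_pow, one_mul]
      exact hqbnd _ node_mem_Icc
    · have hx : 0 < node m i ^ 2 := by
        have := node_ne_zero hm.pos.ne' hi (by grind)
        positivity
      refine nonneg_of_mul_nonneg_left ?_ hx
      rw [eval_C_mul, eval_T_real_node (mem_Iic.2 hi),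
        coeff_basis (mem_range.2 (Nat.lt_succ_of_le hi))]
      have hN := node_sq_mul_coeff_one_nodal_erase hm hi
      have hw := zero_lt_negOnePow_mul_nodalWeight_node hi
      calc 0 ≤ σ * -ω₀ * ((-1) ^ i * nodalWeight (range (m + 1)) (node m) i) := by positivity
        _ = _ := by rw [← hN]; ring
  have habs := abs_coeff_one_T_real hm
  have h₁ := hle p hp hbnd
  have h₂ := hle (-p) (by rwa [natDegree_neg]) (by simpa using hbnd)
  rw [coeff_neg] at h₂
  have : σ * (T ℝ m).coeff 1 ≤ m := by
    calc _ ≤ |σ * (T ℝ m).coeff 1| := le_abs_self _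
      _ = m := by rw [abs_mul, hσ, habs, one_mul]
  exact abs_le.2 ⟨by linarith, by linarith⟩

theorem neg_sq_div_two_le_coeff_two_of_forall_abs_le_one (hm : Even m) {p : ℝ[X]}
    (hp : p.natDegree ≤ m) (hbnd : ∀ x ∈ Set.Icc (-1) 1, |p.eval x| ≤ 1)
    (h0 : p.eval 0 = 1) :
    -((m : ℝ) ^ 2 / 2) ≤ p.coeff 2 := by
  rcases eq_or_ne m 0 with rfl | hm0
  · simp [coeff_eq_zero_of_natDegree_lt (hp.trans_lt two_pos)]
  have hhalf : m / 2 ≤ m := Nat.div_le_self m 2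
  obtain ⟨ε, hεdef⟩ : ∃ ε : ℝ, (-1) ^ (m / 2) = ε := ⟨_, rfl⟩
  have hε : ε * ε = 1 := by rw [← hεdef, ← pow_add, ← two_mul, pow_mul]; simp
  have hεabs : |ε| = 1 := by rw [← hεdef]; simp
  have hT0 : (T ℝ m).eval 0 = ε := by
    rw [← node_div_two hm hm0, eval_T_real_node (mem_Iic.2 hhalf), hεdef]
  have hεω : 0 < ε * (nodal (range (m + 1)) (node m)).coeff 1 := by
    have := inv_pos.2 (zero_lt_negOnePow_mul_nodalWeight_node hhalf)
    rwa [mul_inv, ← inv_pow, inv_neg_one, ← coeff_one_nodal_node hm hm0, hεdef] at this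
  -- The comparison polynomial `ε • T_m` agrees with `p` at the middle node `0`, the only node
  -- whose weight is not controlled by `node_sq_mul_coeff_two_nodal_erase`.
  have hle : (-p).coeff 2 ≤ (Polynomial.C (-ε) * T ℝ m).coeff 2 := by
    refine coeff_le_coeff_of_eval_node_mul_le (m := m) (by rwa [natDegree_neg])
      ((natDegree_C_mul_le _ _).trans (by simp)) fun i hi => ?_
    rw [eval_neg, eval_C_mul, eval_T_real_node (mem_Iic.2 hi)]
    rcases eq_or_ne (2 * i) m with h2 | h2
    · obtain rfl : i = m / 2 := by omega
      rw [node_div_two hm hm0, h0, hεdef, neg_mul ε, hε]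
    refine mul_le_mul_of_abs_le_abs ?_ ?_
    · simp only [abs_neg, abs_mul, abs_pow, abs_one, one_pow, hεabs, mul_one]
      exact hbnd _ node_mem_Icc
    · have hx : 0 < node m i ^ 2 := by
        have := node_ne_zero hm0 hi h2
        positivity
      refine nonneg_of_mul_nonneg_left ?_ hx
      rw [coeff_basis (mem_range.2 (Nat.lt_succ_of_le hi))]
      have hN := node_sq_mul_coeff_two_nodal_erase hm hm0 hi h2
      have hw := zero_lt_negOnePow_mul_nodalWeight_node hi
      calc 0 ≤ ε * (nodal (range (m + 1)) (node m)).coeff 1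
            * ((-1) ^ i * nodalWeight (range (m + 1)) (node m) i) := by positivity
        _ = _ := by rw [← neg_neg ((nodal (range (m + 1)) (node m)).coeff 1), ← hN]; ring
  rw [coeff_neg, coeff_C_mul, coeff_two_T_real, hT0] at hle
  push_cast at hle
  linear_combination hle + (m ^ 2 / 2 : ℝ) * hε

end Polynomial.Chebyshev

namespace Polynomial

open Complex

lemma coeff_sum_range_C_mul_X_pow {R : Type*} [Semiring R] (P : R[X]) (c : ℕ → R) (n : ℕ) :
    (∑ k ∈ range (P.natDegree + 1), C (P.coeff k * c k) * X ^ k).coeff n = P.coeff n * c n := by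
  rw [finsetSum_coeff]
  simp only [coeff_C_mul_X_pow]
  rw [sum_ite_eq]
  split_ifs with h
  · rfl
  · rw [coeff_eq_zero_of_natDegree_lt (by simpa [Nat.lt_succ_iff] using h), zero_mul]

noncomputable def imagAxisRe (P : ℝ[X]) : ℝ[X] :=
  ∑ k ∈ range (P.natDegree + 1), C (P.coeff k * (I ^ k).re) * X ^ k

noncomputable def imagAxisIm (P : ℝ[X]) : ℝ[X] :=
  ∑ k ∈ range (P.natDegree + 1), C (P.coeff k * (I ^ k).im) * X ^ k

lemma aeval_mul_I (P : ℝ[X]) (y : ℝ) :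
    aeval (y * I) P = (imagAxisRe P).eval y + (imagAxisIm P).eval y * I := by
  rw [aeval_eq_sum_range, imagAxisRe, imagAxisIm]
  simp only [eval_finsetSum, eval_mul, eval_C, eval_pow, eval_X, ofReal_sum, sum_mul,
    ← sum_add_distrib]
  refine sum_congr rfl fun k _ => ?_
  rw [real_smul, mul_pow]
  conv_lhs => rw [← re_add_im (I ^ k)]
  push_cast
  ring

lemma sq_norm_aeval_mul_I (P : ℝ[X]) (y : ℝ) :
    ‖aeval (y * I) P‖ ^ 2 = (imagAxisRe P).eval y ^ 2 + (imagAxisIm P).eval y ^ 2 := by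
  rw [aeval_mul_I, Complex.sq_norm, normSq_add_mul_I]

lemma norm_aeval_neg_mul_I (P : ℝ[X]) (y : ℝ) :
    ‖aeval ((-y : ℝ) * I) P‖ = ‖aeval (y * I) P‖ := by
  have : ((-y : ℝ) : ℂ) * I = (starRingEnd ℂ) (y * I) := by simp
  rw [this, aeval_conj, Complex.norm_conj]

lemma coeff_imagAxisRe (P : ℝ[X]) (n : ℕ) : (imagAxisRe P).coeff n = P.coeff n * (I ^ n).re :=
  coeff_sum_range_C_mul_X_pow P _ n

lemma coeff_imagAxisIm (P : ℝ[X]) (n : ℕ) : (imagAxisIm P).coeff n = P.coeff n * (I ^ n).im :=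
  coeff_sum_range_C_mul_X_pow P _ n

lemma natDegree_imagAxisRe_le {P : ℝ[X]} {n : ℕ} (hP : P.natDegree ≤ n + 1) (hn : Even n) :
    (imagAxisRe P).natDegree ≤ n := by
  refine natDegree_le_iff_coeff_eq_zero.2 fun k hk => ?_
  rw [coeff_imagAxisRe]
  obtain rfl | hk := Nat.succ_le_of_lt hk |>.eq_or_lt
  · obtain ⟨j, rfl⟩ := hn
    rw [show (j + j).succ = 2 * j + 1 by omega, pow_succ, pow_mul, I_sq, ← ofReal_one,
      ← ofReal_neg, ← ofReal_pow, re_ofReal_mul, I_re, mul_zero, mul_zero]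
  · rw [coeff_eq_zero_of_natDegree_lt (by omega), zero_mul]

lemma natDegree_imagAxisIm_le {P : ℝ[X]} {n : ℕ} (hP : P.natDegree ≤ n + 1) (hn : Odd n) :
    (imagAxisIm P).natDegree ≤ n := by
  refine natDegree_le_iff_coeff_eq_zero.2 fun k hk => ?_
  rw [coeff_imagAxisIm]
  obtain rfl | hk := Nat.succ_le_of_lt hk |>.eq_or_lt
  · obtain ⟨j, rfl⟩ := hn
    rw [show (2 * j + 1).succ = 2 * (j + 1) by omega, pow_mul, I_sq, ← ofReal_one, ← ofReal_neg,
      ← ofReal_pow, ofReal_im, mul_zero]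
  · rw [coeff_eq_zero_of_natDegree_lt (by omega), zero_mul]

lemma coeff_two_nonneg_of_isLocalMin {f : ℝ[X]} (hf : IsLocalMin (fun x => f.eval x) 0) :
    0 ≤ f.coeff 2 := by
  have h1 : f.coeff 1 = 0 := by
    have := hf.hasDerivAt_eq_zero (f.hasDerivAt 0)
    simpa [← coeff_zero_eq_eval_zero, coeff_derivative] using this
  obtain ⟨q, hq⟩ : X ^ 2 ∣ f - C (f.eval 0) := by
    refine X_pow_dvd_iff.2 fun d hd => ?_
    interval_cases d <;> simp [h1, coeff_zero_eq_eval_zero]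
  have hq2 : f.coeff 2 = q.eval 0 := by
    have := congrArg (coeff · 2) hq
    simpa [coeff_C, coeff_X_pow_mul', coeff_zero_eq_eval_zero] using this
  have hq_nonneg : ∀ᶠ x in nhdsWithin 0 {0}ᶜ, 0 ≤ q.eval x := by
    filter_upwards [nhdsWithin_le_nhds hf, self_mem_nhdsWithin] with x hx hx0
    have := congrArg (eval x) hq
    simp only [eval_sub, eval_C, eval_mul, eval_pow, eval_X] at this
    have hx2 : 0 < x ^ 2 := by
      have : x ≠ 0 := hx0
      positivity
    nlinarith
  rw [hq2]
  exact ge_of_tendsto (q.continuous.continuousAt.tendsto.mono_left nhdsWithin_le_nhds) hq_nonneg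

theorem coeff_one_le_of_norm_aeval_mul_I_le_one {Q : ℝ[X]} {n : ℕ}
    (hdeg : Q.natDegree ≤ n + 1)
    (h0 : Q.coeff 0 = 1) (hQ : ∀ x ∈ Set.Icc (-1 : ℝ) 1, ‖aeval (x * I) Q‖ ≤ 1) :
    Q.coeff 1 ≤ n := by
  set A := imagAxisRe Q
  set B := imagAxisIm Q
  have hAB : ∀ x ∈ Set.Icc (-1 : ℝ) 1, A.eval x ^ 2 + B.eval x ^ 2 ≤ 1 := fun x hx => by
    rw [← sq_norm_aeval_mul_I]
    exact pow_le_one₀ (norm_nonneg _) (hQ x hx)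
  have hB1 : B.coeff 1 = Q.coeff 1 := by simp [B, coeff_imagAxisIm]
  rcases Nat.even_or_odd n with hn | hn
  · have hA0 : A.coeff 0 = 1 := by simp [A, coeff_imagAxisRe, h0]
    have hA1 : A.coeff 1 = 0 := by simp [A, coeff_imagAxisRe]
    have hB0 : B.coeff 0 = 0 := by simp [B, coeff_imagAxisIm]
    have hA2 := Chebyshev.neg_sq_div_two_le_coeff_two_of_forall_abs_le_one hn
      (natDegree_imagAxisRe_le hdeg hn)
      (fun x hx => by
        rw [← sq_le_one_iff_abs_le_one]
        nlinarith [hAB x hx, sq_nonneg (B.eval x)])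
      (by rw [← coeff_zero_eq_eval_zero, hA0])
    have hmin : IsLocalMin (fun x => (1 - A ^ 2 - B ^ 2).eval x) 0 := by
      filter_upwards [Icc_mem_nhds neg_one_lt_zero one_pos] with x hx
      simp only [eval_sub, eval_one, eval_pow, ← coeff_zero_eq_eval_zero, hA0, hB0]
      linarith [hAB x hx]
    have h2 := coeff_two_nonneg_of_isLocalMin hmin
    have hcoeff : (1 - A ^ 2 - B ^ 2).coeff 2 = -(2 * A.coeff 2) - Q.coeff 1 ^ 2 := by
      simp only [coeff_sub, coeff_one, sq, coeff_mul, Nat.sum_antidiagonal_eq_sum_range_succ_mk,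
        sum_range_succ, sum_range_zero, Nat.reduceSub, hA0, hA1, hB0, hB1, two_ne_zero, if_false]
      ring
    exact le_of_sq_le_sq (by linarith) n.cast_nonneg
  · exact (le_abs_self _).trans (hB1 ▸ Chebyshev.abs_coeff_one_le_of_forall_abs_le_one hn
      (natDegree_imagAxisIm_le hdeg hn) fun x hx => by
        rw [← sq_le_one_iff_abs_le_one]
        nlinarith [hAB x hx, sq_nonneg (A.eval x)])

theorem le_of_forall_norm_aeval_mul_I_le_one {P : ℝ[X]} {n : ℕ} (hdeg : P.natDegree ≤ n + 1)
    (h0 : P.coeff 0 = 1) (h1 : P.coeff 1 = 1) {M : ℝ} (hM : 0 ≤ M)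
    (hP : ∀ y ∈ Set.Icc (-M) M, ‖aeval (y * I) P‖ ≤ 1) : M ≤ n := by
  have hdeg' : (P.comp (C M * X)).natDegree ≤ n + 1 :=
    (natDegree_comp_le.trans (Nat.mul_le_mul hdeg ((natDegree_C_mul_le _ _).trans
      natDegree_X_le))).trans (mul_one _).le
  have := coeff_one_le_of_norm_aeval_mul_I_le_one hdeg' (by simp [h0]) fun x hx => by
    rw [aeval_comp]
    simpa [mul_assoc] using hP (M * x) ⟨by nlinarith [hx.1, hx.2], by nlinarith [hx.1, hx.2]⟩
  simpa [h1] using this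

end Polynomial

theorem imaginary_axis_stability_limit_general
    (r : ℕ) (P : Polynomial ℝ)
    (hdeg : P.natDegree ≤ r)
    (h0 : P.coeff 0 = 1) (h1 : P.coeff 1 = 1)
    (a b : ℝ) (ha : a < 0) (hb : 0 < b)
    (hstab : ∀ ξ ∈ Set.Icc a b,
      ‖(P.map Complex.ofRealHom).eval ((ξ : ℂ) * Complex.I)‖ ≤ 1) :
    Set.Icc a b ⊆ Set.Icc (-((r : ℝ) - 1)) ((r : ℝ) - 1) := by
  obtain ⟨n, rfl⟩ : ∃ n, r = n + 1 :=
    Nat.exists_eq_add_of_le' ((le_natDegree_of_ne_zero (h1 ▸ one_ne_zero)).trans hdeg)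
  have hstab' : ∀ y ∈ Set.Icc a b, ‖aeval (y * Complex.I) P‖ ≤ 1 := fun y hy => by
    have := hstab y hy
    rwa [eval_map] at this
  set M := max b (-a)
  have hsym : ∀ y ∈ Set.Icc (-M) M, ‖aeval (y * Complex.I) P‖ ≤ 1 := by
    rintro y ⟨hy₁, hy₂⟩
    by_cases hy : y ∈ Set.Icc a b
    · exact hstab' y hy
    rw [← norm_aeval_neg_mul_I]
    refine hstab' (-y) ?_
    rw [Set.mem_Icc, not_and_or, not_le, not_le] at hy
    rcases max_cases b (-a) with ⟨hM, -⟩ | ⟨hM, -⟩ <;> simp only [M, hM] at hy₁ hy₂ <;>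
      constructor <;> rcases hy with hy | hy <;> linarith
  have hM := le_of_forall_norm_aeval_mul_I_le_one hdeg h0 h1 (hb.le.trans (le_max_left _ _)) hsym
  intro x hx
  push_cast
  constructor <;> linarith [le_max_left b (-a), le_max_right b (-a), hx.1, hx.2]

/-- For an explicit Runge-Kutta method with `r ≥ 2` stages (stability
polynomial `P` of degree ≤ r with `P(0) = 1` and `P'(0) = 1`), if the stability region
`S = {z : |P z| ≤ 1}` contains the imaginary segment `i·[a,b]` with `a < 0 < b`, then
`[a,b] ⊆ [-(r-1), r-1]`. -/
theorem imaginary_axis_stability_limit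
    (r : ℕ) (hr : 2 ≤ r) (P : Polynomial ℝ)
    (hdeg : P.natDegree ≤ r)
    (h0 : P.coeff 0 = 1) (h1 : P.coeff 1 = 1)
    (a b : ℝ) (ha : a < 0) (hb : 0 < b)
    (hstab : ∀ ξ ∈ Set.Icc a b,
      ‖(P.map Complex.ofRealHom).eval ((ξ : ℂ) * Complex.I)‖ ≤ 1) :
    Set.Icc a b ⊆ Set.Icc (-((r : ℝ) - 1)) ((r : ℝ) - 1) :=
  imaginary_axis_stability_limit_general r P hdeg h0 h1 a b ha hb hstab
end

section
/- In the FSAL scheme (IMEXrk_ls) with q ≥ 2, if the third-order conditions hold (in particular all versions of Eq 1: β̄_{q-1}+ᾱ_q = 1, Eq 2: ᾱ_q(α'_{q-1}+d'_{q-1}+β'_{q-2}) = 1/2, and Eq 4: ᾱ_q(α̃_{q-1}+d̃_{q-1}+β̃_{q-2})(α'_{q-1}+d'_{q-1}+β'_{q-2}) = 1/3, for every choice of primed/tilded/barred coefficients from the explicit or implicit family, with explicit d's equal to 0), then necessarily α_q = α̂_q = 3/4, β_{q-1} = β̂_{q-1} = 1/4, α_{q-1}+β_{q-2} = 2/3,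 and α̂_{q-1}+d̂_{q-1}+β̂_{q-2} = 2/3. -/
/-! Restricting Eq 2 and Eq 4 to the purely explicit and to the purely implicit choice gives, for
`s = α_{q-1} + β_{q-2}` and for `s = α̂_{q-1} + d̂_{q-1} + β̂_{q-2}` respectively, the two moment
equations `α s = 1/2`, `α s² = 1/3`; dividing one by the other forces `s = 2/3` and then
`α = 3/4`. Eq 1 finally gives `β_{q-1} = 1 - α_q = 1/4`, and likewise for the implicit tableau. -/

theorem eq_div_and_eq_sq_div_of_mul_eq_of_mul_mul_eq {K : Type*} [Field K] {x s c d : K}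
    (hc : c ≠ 0) (h₁ : x * s = c) (h₂ : x * s * s = d) : s = d / c ∧ x = c ^ 2 / d := by
  have hs : s = d / c := by rw [eq_div_iff hc, ← h₂, h₁, mul_comm]
  have hd : d ≠ 0 := by
    rintro rfl
    rw [zero_div] at hs
    exact hc (by rw [← h₁, hs, mul_zero])
  refine ⟨hs, ?_⟩
  rw [eq_div_iff hd, ← h₂, h₁, ← h₁]
  ring

theorem eq_two_thirds_and_eq_three_quarters_of_moments {x s : ℝ}
    (h₁ : x * s = 1 / 2) (h₂ : x * s * s = 1 / 3) : s = 2 / 3 ∧ x = 3 / 4 := by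
  obtain ⟨hs, hx⟩ := eq_div_and_eq_sq_div_of_mul_eq_of_mul_mul_eq (by norm_num) h₁ h₂
  exact ⟨by rw [hs]; norm_num, by rw [hx]; norm_num⟩

/-- In the FSAL scheme (IMEXrk_ls) with `q ≥ 2`, if all versions of
Eq 1 (`β̄_{q-1} + ᾱ_q = 1`), Eq 2 (`ᾱ_q(α'_{q-1} + d'_{q-1} + β'_{q-2}) = 1/2`) and
Eq 4 (`ᾱ_q(α̃_{q-1} + d̃_{q-1} + β̃_{q-2})(α'_{q-1} + d'_{q-1} + β'_{q-2}) = 1/3`)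
hold — i.e. for every choice of each barred/primed/tilded coefficient from the
explicit or implicit family, the explicit counterpart of `d̂` being `0` — then
`α_q = α̂_q = 3/4`, `β_{q-1} = β̂_{q-1} = 1/4`, `α_{q-1} + β_{q-2} = 2/3`, and
`α̂_{q-1} + d̂_{q-1} + β̂_{q-2} = 2/3`. -/
theorem third_order_forced_values
    (αq αhq βq1 βhq1 αq1 αhq1 dhq1 βq2 βhq2 : ℝ)
    (hEq1 : ∀ x ∈ ({αq, αhq} : Set ℝ), ∀ b ∈ ({βq1, βhq1} : Set ℝ), b + x = 1)
    (hEq2 : ∀ x ∈ ({αq, αhq} : Set ℝ), ∀ a ∈ ({αq1, αhq1} : Set ℝ),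
      ∀ e ∈ ({(0 : ℝ), dhq1} : Set ℝ), ∀ b ∈ ({βq2, βhq2} : Set ℝ),
        x * (a + e + b) = 1 / 2)
    (hEq4 : ∀ x ∈ ({αq, αhq} : Set ℝ), ∀ a₁ ∈ ({αq1, αhq1} : Set ℝ),
      ∀ e₁ ∈ ({(0 : ℝ), dhq1} : Set ℝ), ∀ b₁ ∈ ({βq2, βhq2} : Set ℝ),
      ∀ a₂ ∈ ({αq1, αhq1} : Set ℝ), ∀ e₂ ∈ ({(0 : ℝ), dhq1} : Set ℝ),
      ∀ b₂ ∈ ({βq2, βhq2} : Set ℝ),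
        x * (a₁ + e₁ + b₁) * (a₂ + e₂ + b₂) = 1 / 3) :
    αq = 3 / 4 ∧ αhq = 3 / 4 ∧ βq1 = 1 / 4 ∧ βhq1 = 1 / 4 ∧
      αq1 + βq2 = 2 / 3 ∧ αhq1 + dhq1 + βhq2 = 2 / 3 := by
  simp only [Set.mem_insert_iff, Set.mem_singleton_iff] at hEq1 hEq2 hEq4
  obtain ⟨hs, hαq⟩ := eq_two_thirds_and_eq_three_quarters_of_moments
    (hEq2 αq (.inl rfl) αq1 (.inl rfl) 0 (.inl rfl) βq2 (.inl rfl))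
    (hEq4 αq (.inl rfl) αq1 (.inl rfl) 0 (.inl rfl) βq2 (.inl rfl)
      αq1 (.inl rfl) 0 (.inl rfl) βq2 (.inl rfl))
  obtain ⟨hsh, hαhq⟩ := eq_two_thirds_and_eq_three_quarters_of_moments
    (hEq2 αhq (.inr rfl) αhq1 (.inr rfl) dhq1 (.inr rfl) βhq2 (.inr rfl))
    (hEq4 αhq (.inr rfl) αhq1 (.inr rfl) dhq1 (.inr rfl) βhq2 (.inr rfl)
      αhq1 (.inr rfl) dhq1 (.inr rfl) βhq2 (.inr rfl))
  have hβq1 := hEq1 αq (.inl rfl) βq1 (.inl rfl)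
  have hβhq1 := hEq1 αhq (.inr rfl) βhq1 (.inr rfl)
  refine ⟨hαq, hαhq, by linarith, by linarith, by simpa using hs, hsh⟩
end

section
/- The stability polynomial of the explicit method of scheme (IMEXrk_ls) is P(z) = 1 + Σ_{k=1}^{q} [ (∏_{j=0}^{k-2} α_{q-j}) · (α_{q-k+1} + β_{q-k}) ] z^k, with conventions ∏_{j=0}^{-1} α_{q-j} = 1 and β_0 = 0. That is, for the strictly lower-triangular (q+1)×(q+1) matrix A with A_{j+1,j} = α_j, A_{j+1,1} additionally incremented by β_{j-1} (first-column entries), and b equal to the last row of A, one has 1 + b^T (I - zA)^{-1} 1 · z = P(z). -/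
/-!
Since `w := (1 - zA)⁻¹ 1` satisfies `w = 1 + z A w` and `b` is the last row of `A`, the stability
function `1 + z bᵀ w` is just the last component `w_q`. Reading `(1 - zA) w = 1` row by row gives
`w₀ = 1` and `w_{n+1} = 1 + z (α_{n+1} w_n + β_n w₀)` (for `n = 0` thanks to `β₀ = 0`), and the
truncations `P_n` of the stability polynomial satisfy exactly this recursion, because the
coefficients obey `c_{n+1,k+1} = α_{n+1} c_{n,k}` for `k ≥ 1`. As `A` is strictly lower
triangular, `1 - zA` has determinant one, so `w` is the unique solution.
-/

open Finset

/-- Explicit tableau of the scheme (IMEXrk_ls): strictly lower triangular with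
subdiagonal entries `α` and first-column entries `β`. -/
def expTableau (q : ℕ) (α β : ℕ → ℝ) : Matrix (Fin (q + 1)) (Fin (q + 1)) ℝ :=
  Matrix.of fun i j =>
    (if (j : ℕ) + 1 = (i : ℕ) then α (i : ℕ) else 0) +
    (if (j : ℕ) = 0 ∧ 2 ≤ (i : ℕ) then β ((i : ℕ) - 1) else 0)

namespace Matrix

variable {m R : Type*} [Fintype m] [DecidableEq m] [CommRing R]

theorem det_one_sub_smul_of_strictLowerTriangular [LinearOrder m] {A : Matrix m m R}
    (hA : ∀ i j, i ≤ j → A i j = 0) (z : R) : (1 - z • A).det = 1 := by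
  rw [det_of_isLowerTriangular _ fun i j hij => ?_]
  · exact prod_eq_one fun i _ => by simp [hA i i le_rfl]
  · have hij : i < j := hij
    simp [hA i j hij.le, one_apply_ne hij.ne]

theorem one_add_mul_dotProduct_of_one_sub_smul_mulVec {A : Matrix m m R} {z : R} {w : m → R}
    (hw : (1 - z • A) *ᵥ w = fun _ => 1) (i : m) : 1 + z * (A i ⬝ᵥ w) = w i := by
  have hi := congrFun hw i
  simp only [sub_mulVec, one_mulVec, smul_mulVec, Pi.sub_apply, Pi.smul_apply,
    smul_eq_mul] at hi
  rw [← hi, mulVec]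
  ring

theorem inv_mulVec_eq_of_mulVec_eq {A : Matrix m m R} (hA : IsUnit A.det) {u v : m → R}
    (h : A *ᵥ v = u) : A⁻¹ *ᵥ u = v := by
  rw [← h, mulVec_mulVec, nonsing_inv_mul _ hA, one_mulVec]

end Matrix

theorem sum_Icc_one_eq_sum_range {M : Type*} [AddCommMonoid M] (f : ℕ → M) (n : ℕ) :
    ∑ k ∈ Icc 1 n, f k = ∑ k ∈ range n, f (k + 1) := by
  rw [range_eq_Ico, sum_Ico_add' f 0 n 1]
  rfl

section StabilityPolynomial

variable (α β : ℕ → ℝ)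

noncomputable def stabilityCoeff (n k : ℕ) : ℂ :=
  (∏ j ∈ range (k - 1), (α (n - j) : ℂ)) * ((α (n - k + 1) : ℂ) + (β (n - k) : ℂ))

noncomputable def stabilityPoly (n : ℕ) (z : ℂ) : ℂ :=
  1 + ∑ k ∈ Icc 1 n, stabilityCoeff α β n k * z ^ k

theorem stabilityCoeff_succ_one (n : ℕ) : stabilityCoeff α β (n + 1) 1 = α (n + 1) + β n := by
  simp [stabilityCoeff]

theorem stabilityCoeff_succ_succ (n k : ℕ) :
    stabilityCoeff α β (n + 1) (k + 2) = α (n + 1) * stabilityCoeff α β n (k + 1) := by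
  have hprod : ∏ j ∈ range (k + 1), (α (n + 1 - j) : ℂ)
      = α (n + 1) * ∏ j ∈ range k, (α (n - j) : ℂ) := by
    rw [prod_range_succ', mul_comm]
    simp only [Nat.add_sub_add_right, Nat.sub_zero]
  rw [stabilityCoeff, stabilityCoeff, show k + 2 - 1 = k + 1 by omega, Nat.add_sub_cancel, hprod,
    show n + 1 - (k + 2) = n - (k + 1) by omega]
  ring

theorem stabilityPoly_zero (z : ℂ) : stabilityPoly α β 0 z = 1 := by
  simp [stabilityPoly]

theorem stabilityPoly_succ (n : ℕ) (z : ℂ) :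
    stabilityPoly α β (n + 1) z = 1 + z * (α (n + 1) * stabilityPoly α β n z + β n) := by
  rw [stabilityPoly, stabilityPoly, sum_Icc_one_eq_sum_range, sum_range_succ',
    stabilityCoeff_succ_one, sum_Icc_one_eq_sum_range]
  have hshift : ∑ k ∈ range n, stabilityCoeff α β (n + 1) (k + 1 + 1) * z ^ (k + 1 + 1)
      = z * α (n + 1) * ∑ k ∈ range n, stabilityCoeff α β n (k + 1) * z ^ (k + 1) := by
    rw [mul_sum]
    exact sum_congr rfl fun k _ => by rw [stabilityCoeff_succ_succ]; ring
  linear_combination hshift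

end StabilityPolynomial

open Matrix

section Tableau

variable {q : ℕ} {α β : ℕ → ℝ}

theorem expTableau_apply_of_le {i j : Fin (q + 1)} (h : i ≤ j) : expTableau q α β i j = 0 := by
  have h : (i : ℕ) ≤ j := h
  simp only [expTableau, of_apply]
  rw [if_neg (by omega), if_neg (by omega), add_zero]

theorem expTableau_mulVec_succ (hβ0 : β 0 = 0) (v : Fin (q + 1) → ℂ) (i : Fin q) :
    ((expTableau q α β).map (fun x : ℝ => (x : ℂ)) *ᵥ v) i.succ
      = α (i + 1) * v i.castSucc + β i * v 0 := by
  have hsub : ∀ j : Fin (q + 1), (j : ℕ) = i ↔ j = i.castSucc := fun j => by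
    rw [Fin.ext_iff, Fin.val_castSucc]
  simp only [mulVec, dotProduct, map_apply, expTableau, of_apply,
    Fin.val_succ, Complex.ofReal_add, apply_ite (fun x : ℝ => (x : ℂ)), Complex.ofReal_zero,
    add_mul, sum_add_distrib, ite_mul, zero_mul, Nat.add_right_cancel_iff, add_tsub_cancel_right,
    hsub, Fin.val_eq_zero_iff, ite_and, sum_ite_eq', mem_univ, if_true]
  congr 1
  split_ifs with hi
  · rfl
  · rw [show (i : ℕ) = 0 by omega, hβ0, Complex.ofReal_zero, zero_mul]

theorem one_sub_smul_expTableau_mulVec_stabilityPoly (hβ0 : β 0 = 0) (z : ℂ) :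
    (1 - z • (expTableau q α β).map (fun x : ℝ => (x : ℂ))) *ᵥ
      (fun i : Fin (q + 1) => stabilityPoly α β i z) = fun _ => 1 := by
  funext i
  simp only [sub_mulVec, one_mulVec, smul_mulVec, Pi.sub_apply,
    Pi.smul_apply, smul_eq_mul]
  refine Fin.cases ?_ (fun i => ?_) i
  · have hrow : ((expTableau q α β).map (fun x : ℝ => (x : ℂ)) *ᵥ
        fun i => stabilityPoly α β i z) 0 = 0 := by
      simp [mulVec, dotProduct, expTableau_apply_of_le (Fin.zero_le _)]
    simp [hrow, stabilityPoly_zero]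
  · rw [expTableau_mulVec_succ hβ0]
    simp [stabilityPoly_succ, stabilityPoly_zero]

end Tableau

theorem explicit_stability_polynomial_general
    (q : ℕ) (α β : ℕ → ℝ) (hβ0 : β 0 = 0) (z : ℂ) :
    1 + z * dotProduct
        (fun j => ((expTableau q α β (Fin.last q) j : ℝ) : ℂ))
        (Matrix.mulVec (1 - z • (expTableau q α β).map (fun x : ℝ => (x : ℂ)))⁻¹
          (fun _ => 1))
      = 1 + ∑ k ∈ Finset.Icc 1 q,
          ((∏ j ∈ Finset.range (k - 1), (α (q - j) : ℂ))
            * ((α (q - k + 1) : ℂ) + (β (q - k) : ℂ))) * z ^ k := by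
  have hsolve := one_sub_smul_expTableau_mulVec_stabilityPoly (q := q) (α := α) hβ0 z
  have hdet : IsUnit (1 - z • (expTableau q α β).map (fun x : ℝ => (x : ℂ))).det := by
    rw [det_one_sub_smul_of_strictLowerTriangular fun i j hij => by
      simp [expTableau_apply_of_le hij]]
    exact isUnit_one
  rw [inv_mulVec_eq_of_mulVec_eq hdet hsolve]
  exact one_add_mul_dotProduct_of_one_sub_smul_mulVec hsolve (Fin.last q)

/-- The stability polynomial of the explicit method of scheme
(IMEXrk_ls) — stability function `1 + z·bᵀ(I - zA)⁻¹·1` with `b` the last row of the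
tableau (FSAL) — equals
`P(z) = 1 + Σ_{k=1}^{q} [(∏_{j=0}^{k-2} α_{q-j})(α_{q-k+1} + β_{q-k})] z^k`,
with the conventions that the empty product is `1` and `β_0 = 0`. -/
theorem explicit_stability_polynomial
    (q : ℕ) (hq : 2 ≤ q) (α β : ℕ → ℝ) (hβ0 : β 0 = 0) (z : ℂ) :
    1 + z * dotProduct
        (fun j => ((expTableau q α β (Fin.last q) j : ℝ) : ℂ))
        (Matrix.mulVec (1 - z • (expTableau q α β).map (fun x : ℝ => (x : ℂ)))⁻¹
          (fun _ => 1))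
      = 1 + ∑ k ∈ Finset.Icc 1 q,
          ((∏ j ∈ Finset.range (k - 1), (α (q - j) : ℂ))
            * ((α (q - k + 1) : ℂ) + (β (q - k) : ℂ))) * z ^ k :=
  explicit_stability_polynomial_general q α β hβ0 z
end
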